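/- arXiv:2511.18355 — 2 statements merged into one kernel-verified Lean document; each statement's English description precedes it below -/
import Mathlib

section
/- Let (X,p) be a partial metric space and I an admissible ideal on ℕ. For any sequence {ξ_n} in X and any r ≥ 0, the rough I-statistical limit set I-st-LIM^r ξ_n is closed in the following sense: if {η_m} is a sequence in I-st-LIM^r ξ_n and η ∈ X with |p(η_m,η) − p(η,η)| → 0 as m → ∞, then η ∈ I-st-LIM^r ξ_n. -/
/-! The excess `p(x, z) - p(z, z)` obeys the triangle inequality. Hence if `p(η_m, η) - p(η, η) < ε/2`,
every `k` at which `ξ_k` has excess at least `r + ε` over `η` has excess at least `r + ε/2` over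
`η_m`. So the exceptional density sets for `η` lie inside those for `η_m`, which belong to `I`. -/

open Filter Topology

/-- A partial metric on a type `X`. -/
structure PartialMetric (X : Type*) where
  p : X → X → ℝ
  self_nonneg : ∀ x : X, 0 ≤ p x x
  self_le : ∀ x y : X, p x x ≤ p x y
  eq_iff : ∀ x y : X, x = y ↔ (p x x = p x y ∧ p x y = p y y)
  symm : ∀ x y : X, p x y = p y x
  triangle : ∀ x y z : X, p x y ≤ p x z + p z y - p z z

/-- An admissible nontrivial ideal on ℕ. -/
structure IdealN where
  sets : Set (Set ℕ)
  empty_mem : ∅ ∈ sets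
  subset_mem : ∀ A B : Set ℕ, A ∈ sets → B ⊆ A → B ∈ sets
  union_mem : ∀ A B : Set ℕ, A ∈ sets → B ∈ sets → A ∪ B ∈ sets
  admissible : ∀ n : ℕ, ({n} : Set ℕ) ∈ sets
  nontrivial : (Set.univ : Set ℕ) ∉ sets

open Classical in
/-- `cnt A n` = number of `k` with `1 ≤ k ≤ n` and `k ∈ A`. -/
noncomputable def cnt (A : Set ℕ) (n : ℕ) : ℕ :=
  ((Finset.Icc 1 n).filter (fun k => k ∈ A)).card

/-- `I`-limit of a real sequence. -/
def ILim (I : IdealN) (a : ℕ → ℝ) (L : ℝ) : Prop :=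
  ∀ ε > (0 : ℝ), {n : ℕ | ε ≤ |a n - L|} ∈ I.sets

/-- The rough `I`-statistical limit set of degree `r` of a sequence `x`. -/
def RSLim {X : Type*} (I : IdealN) (P : PartialMetric X) (x : ℕ → X) (r : ℝ) : Set X :=
  {ξ | ∀ ε > (0 : ℝ), ∀ δ > (0 : ℝ),
    {n : ℕ | δ ≤ (cnt {k | r + ε ≤ |P.p (x k) ξ - P.p ξ ξ|} n : ℝ) / n} ∈ I.sets}

lemma PartialMetric.self_le_right {X : Type*} (P : PartialMetric X) (x y : X) :
    P.p y y ≤ P.p x y :=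
  P.symm x y ▸ P.self_le y x

lemma PartialMetric.abs_sub_self {X : Type*} (P : PartialMetric X) (x y : X) :
    |P.p x y - P.p y y| = P.p x y - P.p y y :=
  abs_of_nonneg (sub_nonneg.2 (P.self_le_right x y))

lemma PartialMetric.sub_self_le_add {X : Type*} (P : PartialMetric X) (x y z : X) :
    P.p x z - P.p z z ≤ (P.p x y - P.p y y) + (P.p y z - P.p z z) := by
  linarith [P.triangle x z y]

lemma cnt_mono {A B : Set ℕ} (h : A ⊆ B) (n : ℕ) : cnt A n ≤ cnt B n := by
  classical
  exact Finset.card_le_card (Finset.monotone_filter_right _ fun _ _ hk => h hk)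

lemma IdealN.density_ge_mem_of_subset (I : IdealN) {A B : Set ℕ} (h : A ⊆ B) (δ : ℝ)
    (hB : {n : ℕ | δ ≤ (cnt B n : ℝ) / n} ∈ I.sets) :
    {n : ℕ | δ ≤ (cnt A n : ℝ) / n} ∈ I.sets :=
  I.subset_mem _ _ hB fun n (hn : δ ≤ (cnt A n : ℝ) / n) =>
    hn.trans (div_le_div_of_nonneg_right (by exact_mod_cast cnt_mono h n) n.cast_nonneg)

lemma PartialMetric.far_subset_far_of_close {X : Type*} (P : PartialMetric X) (x : ℕ → X)
    {y z : X} {r s t : ℝ} (hyz : P.p y z - P.p z z ≤ t) :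
    {k | r + (s + t) ≤ |P.p (x k) z - P.p z z|} ⊆ {k | r + s ≤ |P.p (x k) y - P.p y y|} := by
  intro k hk
  simp only [Set.mem_ofPred_eq, P.abs_sub_self] at hk ⊢
  linarith [P.sub_self_le_add (x k) y z]

lemma mem_RSLim_of_forall_exists_close {X : Type*} {I : IdealN} {P : PartialMetric X}
    {x : ℕ → X} {r : ℝ} {z : X}
    (h : ∀ t > (0 : ℝ), ∃ y ∈ RSLim I P x r, P.p y z - P.p z z < t) :
    z ∈ RSLim I P x r := by
  intro ε hε δ hδ
  obtain ⟨y, hy, hyz⟩ := h (ε / 2) (half_pos hε)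
  have hfar := P.far_subset_far_of_close x (r := r) (s := ε / 2) hyz.le
  rw [add_halves] at hfar
  exact I.density_ge_mem_of_subset hfar δ (hy (ε / 2) (half_pos hε) δ hδ)

theorem stmt_3_general {X : Type*} (I : IdealN) (P : PartialMetric X) (x : ℕ → X)
    (r : ℝ) (η : ℕ → X) (η₀ : X)
    (hmem : ∀ m : ℕ, η m ∈ RSLim I P x r)
    (hconv : Filter.Tendsto (fun m => |P.p (η m) η₀ - P.p η₀ η₀|) atTop (nhds 0)) :
    η₀ ∈ RSLim I P x r := by
  refine mem_RSLim_of_forall_exists_close fun t ht => ?_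
  obtain ⟨m, hm⟩ := (hconv.eventually (gt_mem_nhds ht)).exists
  exact ⟨η m, hmem m, (le_abs_self _).trans_lt hm⟩

theorem stmt_3 {X : Type*} (I : IdealN) (P : PartialMetric X) (x : ℕ → X)
    (r : ℝ) (hr : 0 ≤ r) (η : ℕ → X) (η₀ : X)
    (hmem : ∀ m : ℕ, η m ∈ RSLim I P x r)
    (hconv : Filter.Tendsto (fun m => |P.p (η m) η₀ - P.p η₀ η₀|) atTop (nhds 0)) :
    η₀ ∈ RSLim I P x r :=
  stmt_3_general I P x r η η₀ hmem hconv
end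

section
/- Let (X,p) be a partial metric space, I an admissible ideal on ℕ, and let {a_n}, {b_n} be sequences with p(a_n,b_n) → 0 as n → ∞. If {a_n} is rough I-statistically convergent to a of roughness degree r, and c > 0 satisfies p(a_n,a_n) ≤ c for all n, then {b_n} is rough I-statistically convergent to a of roughness degree r + c. -/
/-!
The partial-metric triangle inequality gives `|p(b k, a₀) - p(a k, a₀)| ≤ p(a k, b k)`, and
`p(a k, b k) < c` for all large `k`. Hence, up to finitely many indices, every `k` with
`r + c + ε ≤ |p(b k, a₀) - p(a₀, a₀)|` also satisfies `r + ε ≤ |p(a k, a₀) - p(a₀, a₀)|`.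
Finitely many indices change the counting ratios `cnt · n / n` by `O(1/n)`, and the
indices `n` where that error is large form a finite set, which an admissible ideal contains.
-/

open Filter Topology

theorem PartialMetric.abs_sub_le {X : Type*} (P : PartialMetric X) (x y z : X) :
    |P.p x z - P.p y z| ≤ P.p x y := by
  have hxz := P.triangle x z y
  have hyz := P.triangle y z x
  have hxy := P.symm x y
  have hx := P.self_nonneg x
  have hy := P.self_nonneg y
  rw [abs_le]
  constructor <;> linarith

lemma IdealN.finite_mem (I : IdealN) {A : Set ℕ} (hA : A.Finite) : A ∈ I.sets := by
  induction A, hA using Set.Finite.induction_on with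
  | empty => exact I.empty_mem
  | @insert n A _ _ ih =>
    rw [Set.insert_eq]
    exact I.union_mem _ _ (I.admissible n) ih

lemma cnt_le_cnt_add {A B : Set ℕ} {N : ℕ} (h : ∀ k, N ≤ k → k ∈ B → k ∈ A) (n : ℕ) :
    cnt B n ≤ cnt A n + N := by
  classical
  unfold cnt
  calc ((Finset.Icc 1 n).filter (· ∈ B)).card
      ≤ ((Finset.Icc 1 n).filter (· ∈ A) ∪ Finset.range N : Finset ℕ).card := by
        refine Finset.card_le_card fun k hk => ?_
        simp only [Finset.mem_filter, Finset.mem_union, Finset.mem_range] at hk ⊢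
        by_cases hkN : k < N
        · exact Or.inr hkN
        · exact Or.inl ⟨hk.1, h k (not_lt.1 hkN) hk.2⟩
    _ ≤ ((Finset.Icc 1 n).filter (· ∈ A)).card + N := by
        simpa using Finset.card_union_le ((Finset.Icc 1 n).filter (· ∈ A)) (Finset.range N)

def IStatNull (I : IdealN) (A : Set ℕ) : Prop :=
  ∀ δ > (0 : ℝ), {n : ℕ | δ ≤ (cnt A n : ℝ) / n} ∈ I.sets

theorem IStatNull.mono_eventually {I : IdealN} {A B : Set ℕ} (hA : IStatNull I A)
    (h : ∀ᶠ k in atTop, k ∈ B → k ∈ A) : IStatNull I B := by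
  obtain ⟨N, hN⟩ := eventually_atTop.1 h
  intro δ hδ
  refine I.subset_mem _ _ (I.union_mem _ _ (hA (δ / 2) (half_pos hδ))
    (I.finite_mem (Set.finite_Iic ⌈2 * N / δ⌉₊))) fun n hn => ?_
  by_contra hnot
  simp only [Set.mem_union, Set.mem_ofPred_eq, Set.mem_Iic, not_or, not_le] at hn hnot
  have hn0 : (0 : ℝ) < n := by exact_mod_cast (Nat.zero_le _).trans_lt hnot.2
  have hcnt : (cnt B n : ℝ) ≤ cnt A n + N := by exact_mod_cast cnt_le_cnt_add hN n
  have hMn : 2 * N / δ < n := (Nat.le_ceil _).trans_lt (by exact_mod_cast hnot.2)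
  rw [le_div_iff₀ hn0] at hn
  rw [div_lt_iff₀ hn0] at hnot
  rw [div_lt_iff₀ hδ] at hMn
  linarith [hnot.1]

theorem stmt_8_general {X : Type*} (I : IdealN) (P : PartialMetric X) (a b : ℕ → X)
    (r : ℝ) (a₀ : X) (c : ℝ) (hc : 0 < c)
    (hab : Filter.Tendsto (fun n => P.p (a n) (b n)) atTop (nhds 0))
    (ha : a₀ ∈ RSLim I P a r) :
    a₀ ∈ RSLim I P b (r + c) := by
  intro ε hε
  have ha' : IStatNull I {k | r + ε ≤ |P.p (a k) a₀ - P.p a₀ a₀|} := ha ε hε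
  refine ha'.mono_eventually ?_
  filter_upwards [hab.eventually_lt_const hc] with k hk hbk
  have hba := P.abs_sub_le (b k) (a k) a₀
  rw [P.symm (b k) (a k)] at hba
  have htri := abs_sub_le (P.p (b k) a₀) (P.p (a k) a₀) (P.p a₀ a₀)
  change r + c + ε ≤ _ at hbk
  change r + ε ≤ _
  linarith

theorem stmt_8 {X : Type*} (I : IdealN) (P : PartialMetric X) (a b : ℕ → X)
    (r : ℝ) (hr : 0 ≤ r) (a₀ : X) (c : ℝ) (hc : 0 < c)
    (hab : Filter.Tendsto (fun n => P.p (a n) (b n)) atTop (nhds 0))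
    (ha : a₀ ∈ RSLim I P a r)
    (hself : ∀ n : ℕ, P.p (a n) (a n) ≤ c) :
    a₀ ∈ RSLim I P b (r + c) :=
  stmt_8_general I P a b r a₀ c hc hab ha
end
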